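/- arXiv:1808.04808 — 5 statements merged into one kernel-verified Lean document; each statement's English description precedes it below -/
import Mathlib

section
/- Let A be a ring, B a subring, and suppose A is a separable extension of B. If π: A → B is a surjective ring homomorphism that splits the inclusion B ↪ A (i.e., π restricted to B is the identity), and I = ker π, then I² = I. -/
open scoped TensorProduct

section SepPrelude

variable {A : Type*} [Ring A]

/-- Relations defining `A ⊗_B A` as a quotient of `A ⊗_ℤ A`. -/
def sepRel (B : Subring A) : Submodule ℤ (TensorProduct ℤ A A) :=
  Submodule.span ℤ
    {z | ∃ (x y : A) (b : B), z = (x * (b : A)) ⊗ₜ[ℤ] y - x ⊗ₜ[ℤ] ((b : A) * y)}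

/-- The tensor product `A ⊗_B A` of `A` with itself over the subring `B`. -/
abbrev TensorOverSub (B : Subring A) : Type _ := TensorProduct ℤ A A ⧸ sepRel B

/-- The basic tensor `x ⊗_B y`. -/
noncomputable def tmulB (B : Subring A) (x y : A) : TensorOverSub B :=
  Submodule.Quotient.mk (x ⊗ₜ[ℤ] y)

/-- Left multiplication `a • (x ⊗ y) = (a*x) ⊗ y` on `A ⊗_B A`. -/
noncomputable def lmulB (B : Subring A) (a : A) :
    TensorOverSub B →ₗ[ℤ] TensorOverSub B :=
  Submodule.mapQ _ _ (LinearMap.rTensor A (LinearMap.mulLeft ℤ a)) (by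
    refine Submodule.span_le.mpr ?_
    rintro _ ⟨x, y, b, rfl⟩
    simp only [SetLike.mem_coe, Submodule.mem_comap, map_sub, LinearMap.rTensor_tmul,
      LinearMap.mulLeft_apply]
    exact Submodule.subset_span ⟨a * x, y, b, by
      show LinearMap.rTensor A (LinearMap.mulLeft ℤ a)
        ((x * (b : A)) ⊗ₜ[ℤ] y - x ⊗ₜ[ℤ] ((b : A) * y)) = _
      rw [map_sub, LinearMap.rTensor_tmul, LinearMap.rTensor_tmul]
      simp [mul_assoc]⟩)

/-- Right multiplication `(x ⊗ y) • a = x ⊗ (y*a)` on `A ⊗_B A`. -/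
noncomputable def rmulB (B : Subring A) (a : A) :
    TensorOverSub B →ₗ[ℤ] TensorOverSub B :=
  Submodule.mapQ _ _ (LinearMap.lTensor A (LinearMap.mulRight ℤ a)) (by
    refine Submodule.span_le.mpr ?_
    rintro _ ⟨x, y, b, rfl⟩
    simp only [SetLike.mem_coe, Submodule.mem_comap, map_sub, LinearMap.lTensor_tmul,
      LinearMap.mulRight_apply]
    exact Submodule.subset_span ⟨x, y * a, b, by
      show LinearMap.lTensor A (LinearMap.mulRight ℤ a)
        ((x * (b : A)) ⊗ₜ[ℤ] y - x ⊗ₜ[ℤ] ((b : A) * y)) = _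
      rw [map_sub, LinearMap.lTensor_tmul, LinearMap.lTensor_tmul]
      simp [mul_assoc]⟩)

/-- The multiplication map `μ : A ⊗_B A → A`. -/
noncomputable def mulMapB (B : Subring A) : TensorOverSub B →ₗ[ℤ] A :=
  Submodule.liftQ _ (LinearMap.mul' ℤ A) (by
    refine Submodule.span_le.mpr ?_
    rintro _ ⟨x, y, b, rfl⟩
    show LinearMap.mul' ℤ A ((x * (b : A)) ⊗ₜ[ℤ] y - x ⊗ₜ[ℤ] ((b : A) * y)) = 0
    rw [map_sub, LinearMap.mul'_apply, LinearMap.mul'_apply, mul_assoc, sub_self])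

/-- `A` is a separable extension of `B`: there is a separability element in `A ⊗_B A`. -/
def IsSepExt (B : Subring A) : Prop :=
  ∃ e : TensorOverSub B, (∀ a : A, lmulB B a e = rmulB B a e) ∧ mulMapB B e = 1

end SepPrelude

/-!
Write `I = ker π`. Because `π` fixes `B`, the map `x ⊗ y ↦ π(x) (y - π(y)) mod I²` is balanced
over `B`, so it is defined on `A ⊗_B A`. For `a ∈ I` and a separability element `e = ∑ xᵢ ⊗ yᵢ`
it kills `a e` since `π(a) = 0`, and sends `e a` to `∑ π(xᵢ) yᵢ a ≡ ∑ xᵢ yᵢ a = a mod I²`,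
since `π(xᵢ) - xᵢ` and `yᵢ a` both lie in `I`. As `a e = e a`, we get `a ∈ I²`.
-/

namespace SplitSubring

variable {A : Type*} [Ring A] {B : Subring A} (π : A →+* B)

lemma coe_apply_sub_mem_ker (hsplit : ∀ b : B, π (b : A) = b) (x : A) :
    (π x : A) - x ∈ RingHom.ker π := by
  rw [RingHom.mem_ker, map_sub, hsplit, sub_self]

noncomputable def kerSqPairingZ :
    TensorProduct ℤ A A →ₗ[ℤ] A ⧸ (RingHom.ker π * RingHom.ker π) :=
  TensorProduct.lift (LinearMap.mk₂ ℤ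
    (fun x y => Submodule.Quotient.mk ((π x : A) * (y - (π y : A))))
    (fun x x' y => by
      rw [← Submodule.Quotient.mk_add]
      exact congrArg _ (by push_cast [map_add]; noncomm_ring))
    (fun n x y => by
      rw [← Submodule.Quotient.mk_smul]
      exact congrArg _ (by push_cast [map_zsmul]; rw [smul_mul_assoc]))
    (fun x y y' => by
      rw [← Submodule.Quotient.mk_add]
      exact congrArg _ (by push_cast [map_add]; noncomm_ring))
    (fun n x y => by
      rw [← Submodule.Quotient.mk_smul]
      exact congrArg _ (by push_cast [map_zsmul]; rw [← smul_sub, mul_smul_comm])))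

lemma kerSqPairingZ_tmul (x y : A) :
    kerSqPairingZ π (x ⊗ₜ[ℤ] y) = Submodule.Quotient.mk ((π x : A) * (y - (π y : A))) :=
  rfl

noncomputable def kerSqPairing (hsplit : ∀ b : B, π (b : A) = b) :
    TensorOverSub B →ₗ[ℤ] A ⧸ (RingHom.ker π * RingHom.ker π) :=
  Submodule.liftQ _ (kerSqPairingZ π) (by
    refine Submodule.span_le.mpr ?_
    rintro _ ⟨x, y, b, rfl⟩
    simp only [SetLike.mem_coe, LinearMap.mem_ker, map_sub, kerSqPairingZ_tmul, map_mul,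
      hsplit b, sub_eq_zero]
    exact congrArg _ (by push_cast; noncomm_ring))

variable (hsplit : ∀ b : B, π (b : A) = b)

lemma kerSqPairing_tmulB (x y : A) :
    kerSqPairing π hsplit (tmulB B x y) = Submodule.Quotient.mk ((π x : A) * (y - (π y : A))) :=
  rfl

lemma kerSqPairing_lmulB {a : A} (ha : a ∈ RingHom.ker π) (t : TensorOverSub B) :
    kerSqPairing π hsplit (lmulB B a t) = 0 := by
  suffices (kerSqPairing π hsplit).comp (lmulB B a) = 0 from LinearMap.congr_fun this t
  refine Submodule.linearMap_qext _ (TensorProduct.ext' fun x y => ?_)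
  change kerSqPairing π hsplit (tmulB B (a * x) y) = 0
  rw [kerSqPairing_tmulB, map_mul, RingHom.mem_ker.mp ha, zero_mul, ZeroMemClass.coe_zero,
    zero_mul, Submodule.Quotient.mk_zero]

lemma kerSqPairing_rmulB {a : A} (ha : a ∈ RingHom.ker π) (t : TensorOverSub B) :
    kerSqPairing π hsplit (rmulB B a t) = Submodule.Quotient.mk (mulMapB B t * a) := by
  suffices (kerSqPairing π hsplit).comp (rmulB B a) =
      ((RingHom.ker π * RingHom.ker π).mkQ.restrictScalars ℤ).comp
        ((LinearMap.mulRight ℤ a).comp (mulMapB B)) from LinearMap.congr_fun this t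
  refine Submodule.linearMap_qext _ (TensorProduct.ext' fun x y => ?_)
  change kerSqPairing π hsplit (tmulB B x (y * a)) = Submodule.Quotient.mk (x * y * a)
  rw [kerSqPairing_tmulB, map_mul, RingHom.mem_ker.mp ha, mul_zero, ZeroMemClass.coe_zero,
    sub_zero, Submodule.Quotient.eq]
  have hya : y * a ∈ RingHom.ker π := Ideal.mul_mem_left _ y ha
  simpa [sub_mul, mul_assoc] using
    Ideal.mul_mem_mul (coe_apply_sub_mem_ker π hsplit x) hya

end SplitSubring

open SplitSubring in
theorem ker_sq_eq_ker_of_separable_split_general {A : Type*} [Ring A] (B : Subring A)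
    (π : A →+* B) (hsplit : ∀ b : B, π (b : A) = b)
    (hsep : IsSepExt B) :
    RingHom.ker π * RingHom.ker π = RingHom.ker π := by
  refine le_antisymm Ideal.mul_le_left fun a ha => ?_
  obtain ⟨e, he, hmu⟩ := hsep
  rw [← Submodule.Quotient.mk_eq_zero]
  calc Submodule.Quotient.mk a = Submodule.Quotient.mk (mulMapB B e * a) := by
        rw [hmu, one_mul]
    _ = kerSqPairing π hsplit (rmulB B a e) := (kerSqPairing_rmulB π hsplit ha e).symm
    _ = kerSqPairing π hsplit (lmulB B a e) := by rw [he]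
    _ = 0 := kerSqPairing_lmulB π hsplit ha e

/-- If `A` is separable over `B` and `π : A → B` is a surjective ring
homomorphism splitting the inclusion `B ↪ A`, then `I² = I` for `I = ker π`. -/
theorem ker_sq_eq_ker_of_separable_split {A : Type*} [Ring A] (B : Subring A)
    (π : A →+* B) (hπ : Function.Surjective π) (hsplit : ∀ b : B, π (b : A) = b)
    (hsep : IsSepExt B) :
    RingHom.ker π * RingHom.ker π = RingHom.ker π :=
  ker_sq_eq_ker_of_separable_split_general B π hsplit hsep
end

section
/- Let B ⊆ A be a ring extension. If A has depth 1 over B, i.e., there exist B-B-bimodule maps f_i: A → B and elements r_i ∈ A^B (the centralizer of B in A) such that a = Σ_i f_i(a)·r_i for all a ∈ A, then A is ring isomorphic to B ⊗_{Z(B)} A^B. -/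
/-!
Multiplication `b ⊗ c ↦ b * c` is a ring map `B ⊗_{Z(B)} A^B → A` because `A^B` commutes
with `B`. The depth-one data give its inverse `a ↦ Σᵢ fᵢ(a) ⊗ rᵢ`: a bimodule map `A → B`
sends `A^B` into `Z(B)`, so `fᵢ(b c) ⊗ rᵢ = b ⊗ fᵢ(c) • rᵢ`, and these sum to `b ⊗ c`.
-/

open scoped TensorProduct

section

variable {A : Type*} [Ring A] (B : Subring A)

noncomputable instance centerAlgebraSelf : Algebra (Subring.center B) B :=
  RingHom.toAlgebra' (SubringClass.subtype _)
    (fun c x => (Subring.mem_center_iff.mp c.2 x).symm)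

def centerToCentralizer : Subring.center B →+* Subring.centralizer (B : Set A) where
  toFun c := ⟨((c : B) : A), by
    intro g hg
    exact congrArg Subtype.val (Subring.mem_center_iff.mp c.2 ⟨g, hg⟩)⟩
  map_one' := rfl
  map_mul' _ _ := rfl
  map_zero' := rfl
  map_add' _ _ := rfl

noncomputable instance centerAlgebraCentralizer :
    Algebra (Subring.center B) (Subring.centralizer (B : Set A)) :=
  RingHom.toAlgebra' (centerToCentralizer B)
    (fun c x => by
      have hc : ((c : B) : A) ∈ (B : Set A) := (c : B).2
      exact Subtype.ext (x.2 _ hc))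

namespace Subring

noncomputable def tensorCentralizerMulAddHom :
    B ⊗[center B] centralizer (B : Set A) →+ A :=
  TensorProduct.liftAddHom
    ((AddMonoidHom.mul.comp B.subtype.toAddMonoidHom).compl₂
      (centralizer (B : Set A)).subtype.toAddMonoidHom)
    fun z b c => by
      have hzb : (b : A) * (z : B) = (z : B) * b :=
        congrArg Subtype.val (mem_center_iff.mp z.2 b)
      change ((z : B) * b : A) * c = b * ((z : B) * c)
      rw [← mul_assoc, hzb]

@[simp]
theorem tensorCentralizerMulAddHom_tmul (b : B) (c : centralizer (B : Set A)) :
    tensorCentralizerMulAddHom B (b ⊗ₜ c) = b * c :=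
  rfl

noncomputable def tensorCentralizerMulRingHom :
    B ⊗[center B] centralizer (B : Set A) →+* A where
  __ := tensorCentralizerMulAddHom B
  map_one' := by simp [Algebra.TensorProduct.one_def]
  map_mul' x y := by
    change tensorCentralizerMulAddHom B (x * y) =
      tensorCentralizerMulAddHom B x * tensorCentralizerMulAddHom B y
    induction x with
    | zero => simp
    | add x x' hx hx' => simp only [add_mul, map_add, hx, hx']
    | tmul b c =>
      induction y with
      | zero => simp
      | add y y' hy hy' => simp only [mul_add, map_add, hy, hy']
      | tmul b' c' =>
        simp only [Algebra.TensorProduct.tmul_mul_tmul, tensorCentralizerMulAddHom_tmul,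
          coe_mul, mul_assoc]
        rw [← mul_assoc (c : A), ← c.2 b' b'.2, mul_assoc]

theorem apply_mem_center_of_mem_centralizer (g : A →+ B)
    (hg : ∀ (b : B) (a : A), g (b * a) = b * g a ∧ g (a * b) = g a * b)
    {c : A} (hc : c ∈ centralizer (B : Set A)) : g c ∈ center B :=
  mem_center_iff.mpr fun b => by rw [← (hg b c).1, ← (hg b c).2, hc b b.2]

variable {B} {n : ℕ} (f : Fin n → (A →+ B)) (r : Fin n → A)
  (hr : ∀ i, r i ∈ centralizer (B : Set A)) (hd : ∀ a : A, a = ∑ i, ((f i a : A) * r i))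
include hr hd

theorem tensorCentralizerMulRingHom_surjective :
    Function.Surjective (tensorCentralizerMulRingHom B) := fun a =>
  ⟨∑ i, f i a ⊗ₜ ⟨r i, hr i⟩, by
    rw [map_sum]
    exact (hd a).symm⟩

theorem tensorCentralizerMulRingHom_injective
    (hf : ∀ i, ∀ (b : B) (a : A), f i (b * a) = b * f i a ∧ f i (a * b) = f i a * b) :
    Function.Injective (tensorCentralizerMulRingHom B) := by
  let ν : A → B ⊗[center B] centralizer (B : Set A) := fun a =>
    ∑ i, f i a ⊗ₜ ⟨r i, hr i⟩
  refine Function.LeftInverse.injective (g := ν) fun x => ?_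
  induction x with
  | zero => simp [ν]
  | add x y hx hy =>
    simp only [map_add, ν, TensorProduct.add_tmul, Finset.sum_add_distrib] at hx hy ⊢
    rw [hx, hy]
  | tmul b c =>
    have hz i : f i c ∈ center B := apply_mem_center_of_mem_centralizer B (f i) (hf i) c.2
    have hc : c = ∑ i, (⟨f i c, hz i⟩ : center B) • (⟨r i, hr i⟩ : centralizer (B : Set A)) :=
      Subtype.ext ((hd c).trans (by rw [AddSubmonoidClass.coe_finsetSum]; rfl))
    calc ν (b * c)
        = ∑ i, b ⊗ₜ ((⟨f i c, hz i⟩ : center B) • (⟨r i, hr i⟩ : centralizer (B : Set A))) :=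
          Finset.sum_congr rfl fun i _ => by
            rw [← TensorProduct.smul_tmul, (hf i b c).1, mem_center_iff.mp (hz i) b]
            rfl
      _ = b ⊗ₜ c := by rw [← TensorProduct.tmul_sum, ← hc]

end Subring

/-- If `B ⊆ A` has depth 1 (central projectivity: `a = Σᵢ fᵢ(a)·rᵢ`
with `fᵢ` `B`-`B`-bimodule maps `A → B` and `rᵢ ∈ A^B`), then
`A ≅ B ⊗_{Z(B)} A^B` as rings, via `b ⊗ r ↦ b·r`. -/
theorem depth_one_tensor_decomposition
    (n : ℕ) (f : Fin n → (A →+ B))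
    (hf : ∀ i, ∀ (b : B) (a : A),
      f i ((b : A) * a) = b * f i a ∧ f i (a * (b : A)) = f i a * b)
    (r : Fin n → A) (hr : ∀ i, r i ∈ Subring.centralizer (B : Set A))
    (hd : ∀ a : A, a = ∑ i, ((f i a : A) * r i)) :
    ∃ φ : (B ⊗[Subring.center B] Subring.centralizer (B : Set A)) ≃+* A,
      ∀ (b : B) (c : Subring.centralizer (B : Set A)),
        φ (b ⊗ₜ c) = (b : A) * (c : A) :=
  ⟨RingEquiv.ofBijective (Subring.tensorCentralizerMulRingHom B)
      ⟨Subring.tensorCentralizerMulRingHom_injective f r hr hd hf,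
        Subring.tensorCentralizerMulRingHom_surjective f r hr hd⟩,
    fun _ _ => rfl⟩
end
end

section
/- If B ⊆ A is a centrally projective (depth 1) ring extension, then Z(B) ⊆ Z(A). -/
theorem Subring.commute_coe_of_mem_center {R : Type*} [Ring R] {B : Subring R} {z : B}
    (hz : z ∈ Subring.center B) (b : B) : Commute (z : R) b :=
  congrArg Subtype.val (Subring.mem_center_iff.mp hz b).symm

theorem center_le_center_of_depth_one_general {A : Type*} [Ring A] (B : Subring A)
    (n : ℕ) (f : Fin n → (A →+ B))
    (hf : ∀ i, ∀ (b : B) (a : A),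
      f i ((b : A) * a) = b * f i a ∧ f i (a * (b : A)) = f i a * b)
    (r : Fin n → A)
    (hd : ∀ a : A, a = ∑ i, ((f i a : A) * r i)) :
    ∀ z : B, z ∈ Subring.center B → (z : A) ∈ Subring.center A := by
  intro z hz
  refine Subring.mem_center_iff.mpr fun a => ?_
  calc a * z = ∑ i, (f i (a * z) : A) * r i := hd _
    _ = ∑ i, (z : A) * ((f i a : A) * r i) := by
        refine Finset.sum_congr rfl fun i _ => ?_
        rw [(hf i z a).2, Subring.coe_mul, ← (Subring.commute_coe_of_mem_center hz _).eq,
          mul_assoc]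
    _ = z * a := by rw [← Finset.mul_sum, ← hd]

/-- If `B ⊆ A` is centrally projective (depth 1), i.e. there are
`B`-`B`-bimodule maps `fᵢ : A → B` and elements `rᵢ ∈ A^B` with
`a = Σᵢ fᵢ(a)·rᵢ`, then `Z(B) ⊆ Z(A)`. -/
theorem center_le_center_of_depth_one {A : Type*} [Ring A] (B : Subring A)
    (n : ℕ) (f : Fin n → (A →+ B))
    (hf : ∀ i, ∀ (b : B) (a : A),
      f i ((b : A) * a) = b * f i a ∧ f i (a * (b : A)) = f i a * b)
    (r : Fin n → A) (hr : ∀ i, r i ∈ Subring.centralizer (B : Set A))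
    (hd : ∀ a : A, a = ∑ i, ((f i a : A) * r i)) :
    ∀ z : B, z ∈ Subring.center B → (z : A) ∈ Subring.center A :=
  center_le_center_of_depth_one_general B n f hf r hd
end

section
/- A split ring extension R ⊇ S has depth 1 (is centrally projective) if and only if there exists an S-S-bimodule projection E: R → S that is a full idempotent in the ring U = End_{S-S}(R). -/
/-!
Since `E ∈ U`, the additive subgroup generated by `UEU` is all of `U` exactly when
`1 = ∑ᵢ αᵢ E βᵢ` for finitely many `αᵢ, βᵢ ∈ U`. Such a decomposition of the identity is the
same thing as a depth-one decomposition `id_R = ∑ᵢ fᵢ gᵢ`: from one take `fᵢ = αᵢ|_S` and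
`gᵢ = E βᵢ`, from the other `αᵢ = fᵢ E` and `βᵢ = gᵢ`, using that `E` is the identity on `S`.
-/

section UPrelude

variable {R : Type*} [Ring R]

/-- The ring `U = End_{S-S}(R)` of `S`-`S`-bimodule endomorphisms of `R`, as a
subring of the ring of `ℤ`-linear (i.e. additive) endomorphisms of `R`. -/
def bimodEnd (S : Subring R) : Subring (Module.End ℤ R) where
  carrier := {F | ∀ s ∈ S, ∀ r : R, F (s * r) = s * F r ∧ F (r * s) = F r * s}
  one_mem' := by intro s hs r; exact ⟨rfl, rfl⟩
  mul_mem' := by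
    intro F G hF hG s hs r
    constructor
    · show F (G (s * r)) = s * F (G r)
      rw [(hG s hs r).1, (hF s hs (G r)).1]
    · show F (G (r * s)) = F (G r) * s
      rw [(hG s hs r).2, (hF s hs (G r)).2]
  zero_mem' := by intro s hs r; simp
  add_mem' := by
    intro F G hF hG s hs r
    constructor
    · show F (s * r) + G (s * r) = s * (F r + G r)
      rw [(hF s hs r).1, (hG s hs r).1, mul_add]
    · show F (r * s) + G (r * s) = (F r + G r) * s
      rw [(hF s hs r).2, (hG s hs r).2, add_mul]
  neg_mem' := by
    intro F hF s hs r
    constructor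
    · show -(F (s * r)) = s * -(F r)
      rw [(hF s hs r).1, mul_neg]
    · show -(F (r * s)) = -(F r) * s
      rw [(hF s hs r).2, neg_mul]

end UPrelude

theorem exists_sum_mul_mul_eq_of_mem_addSubgroupClosure {A : Type*} [Ring A] {U : Subring A}
    {e x : A} (hx : x ∈ AddSubgroup.closure {y | ∃ α ∈ U, ∃ β ∈ U, y = α * e * β}) :
    ∃ (n : ℕ) (α β : Fin n → A), (∀ i, α i ∈ U) ∧ (∀ i, β i ∈ U) ∧ ∑ i, α i * e * β i = x := by
  rw [← Submodule.span_int_eq_addSubgroupClosure, Submodule.mem_toAddSubgroup,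
    Submodule.mem_span_set'] at hx
  obtain ⟨n, c, y, rfl⟩ := hx
  choose α hα β hβ hy using fun i ↦ (y i).2
  refine ⟨n, fun i ↦ c i • α i, β, fun i ↦ zsmul_mem (hα i) _, hβ, ?_⟩
  simp only [hy, smul_mul_assoc]

theorem addSubgroupClosure_mul_mul_eq_iff_exists_sum_eq_one {A : Type*} [Ring A]
    {U : Subring A} {e : A} (he : e ∈ U) :
    AddSubgroup.closure {y | ∃ α ∈ U, ∃ β ∈ U, y = α * e * β} = U.toAddSubgroup ↔
      ∃ (n : ℕ) (α β : Fin n → A), (∀ i, α i ∈ U) ∧ (∀ i, β i ∈ U) ∧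
        ∑ i, α i * e * β i = 1 := by
  constructor
  · intro h
    apply exists_sum_mul_mul_eq_of_mem_addSubgroupClosure
    rw [h]
    exact U.one_mem
  · rintro ⟨n, α, β, hα, hβ, hsum⟩
    refine le_antisymm ((AddSubgroup.closure_le _).2 ?_) fun γ hγ ↦ ?_
    · rintro _ ⟨a, ha, b, hb, rfl⟩
      exact U.mul_mem (U.mul_mem ha he) hb
    · have hγ' : γ = ∑ i, γ * α i * e * β i := calc
        γ = γ * ∑ i, α i * e * β i := by rw [hsum, mul_one]
        _ = ∑ i, γ * α i * e * β i := by simp only [Finset.mul_sum, mul_assoc]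
      rw [hγ']
      exact AddSubgroup.sum_mem _ fun i _ ↦ AddSubgroup.subset_closure
        ⟨γ * α i, U.mul_mem hγ (hα i), β i, hβ i, rfl⟩

section Bimodule

variable {R : Type*} [Ring R]

def IsDepthOne (S : Subring R) : Prop :=
  ∃ (n : ℕ) (f : Fin n → (S →+ R)) (g : Fin n → (R →+ S)),
    (∀ i, ∀ (s x : S), f i (s * x) = (s : R) * f i x ∧ f i (x * s) = f i x * (s : R)) ∧
    (∀ i, ∀ (s : S) (r : R), g i ((s : R) * r) = s * g i r ∧ g i (r * (s : R)) = g i r * s) ∧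
    (∀ r : R, r = ∑ i, f i (g i r))

variable {S : Subring R} {E : Module.End ℤ R}

theorem exists_sum_mul_mul_eq_one_of_isDepthOne (hEU : E ∈ bimodEnd S) (hES : ∀ r, E r ∈ S)
    (hEid : ∀ s ∈ S, E s = s) (h : IsDepthOne S) :
    ∃ (n : ℕ) (α β : Fin n → Module.End ℤ R), (∀ i, α i ∈ bimodEnd S) ∧
      (∀ i, β i ∈ bimodEnd S) ∧ ∑ i, α i * E * β i = 1 := by
  obtain ⟨n, f, g, hf, hg, hsum⟩ := h
  let p : R →+ S := E.toAddMonoidHom.codRestrict S hES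
  refine ⟨n, fun i ↦ ((f i).comp p).toIntLinearMap,
    fun i ↦ (S.subtype.toAddMonoidHom.comp (g i)).toIntLinearMap, ?_, ?_, ?_⟩
  · intro i s hs r
    have hpl : p (s * r) = ⟨s, hs⟩ * p r := Subtype.ext (hEU s hs r).1
    have hpr : p (r * s) = p r * ⟨s, hs⟩ := Subtype.ext (hEU s hs r).2
    show f i (p (s * r)) = s * f i (p r) ∧ f i (p (r * s)) = f i (p r) * s
    rw [hpl, hpr]
    exact hf i ⟨s, hs⟩ (p r)
  · intro i s hs r
    exact ⟨congrArg Subtype.val (hg i ⟨s, hs⟩ r).1, congrArg Subtype.val (hg i ⟨s, hs⟩ r).2⟩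
  · ext r
    have hp : ∀ s : S, p s = s := fun s ↦ Subtype.ext (hEid s s.2)
    rw [LinearMap.sum_apply, Module.End.one_apply]
    conv_rhs => rw [hsum r]
    refine Finset.sum_congr rfl fun i _ ↦ ?_
    show f i (p (E (g i r))) = f i (g i r)
    rw [hEid _ (g i r).2, hp]

theorem isDepthOne_of_sum_mul_mul_eq_one (hEU : E ∈ bimodEnd S) (hES : ∀ r, E r ∈ S) {n : ℕ}
    {α β : Fin n → Module.End ℤ R} (hα : ∀ i, α i ∈ bimodEnd S) (hβ : ∀ i, β i ∈ bimodEnd S)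
    (hsum : ∑ i, α i * E * β i = 1) : IsDepthOne S := by
  refine ⟨n, fun i ↦ (α i).toAddMonoidHom.comp S.subtype.toAddMonoidHom,
    fun i ↦ (E * β i).toAddMonoidHom.codRestrict S fun r ↦ hES _, ?_, ?_, ?_⟩
  · intro i s x
    exact hα i s s.2 x
  · intro i s r
    constructor <;> apply Subtype.ext
    · show E (β i (s * r)) = s * E (β i r)
      rw [(hβ i s s.2 r).1, (hEU s s.2 _).1]
    · show E (β i (r * s)) = E (β i r) * s
      rw [(hβ i s s.2 r).2, (hEU s s.2 _).2]
  · intro r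
    have := LinearMap.congr_fun hsum r
    rw [LinearMap.sum_apply] at this
    exact this.symm

end Bimodule

/-- A split ring extension `R ⊇ S` has depth 1 (is centrally
projective, i.e. `id_R = Σᵢ fᵢ ∘ gᵢ` with `fᵢ ∈ Hom_{S-S}(S,R)`,
`gᵢ ∈ Hom_{S-S}(R,S)`) iff there is an `S`-`S`-bimodule projection `E : R → S`
that is a full idempotent in `U = End_{S-S}(R)`, i.e. `UEU = U`. -/
theorem depth_one_iff_full_projection {R : Type*} [Ring R] (S : Subring R)
    (hsplit : ∃ E : Module.End ℤ R, E ∈ bimodEnd S ∧ (∀ r : R, E r ∈ S) ∧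
      (∀ s ∈ S, E s = s)) :
    (∃ (n : ℕ) (f : Fin n → (S →+ R)) (g : Fin n → (R →+ S)),
        (∀ i, ∀ (s x : S), f i (s * x) = (s : R) * f i x ∧
          f i (x * s) = f i x * (s : R)) ∧
        (∀ i, ∀ (s : S) (r : R), g i ((s : R) * r) = s * g i r ∧
          g i (r * (s : R)) = g i r * s) ∧
        (∀ r : R, r = ∑ i, f i (g i r))) ↔
      (∃ E : Module.End ℤ R, E ∈ bimodEnd S ∧ (∀ r : R, E r ∈ S) ∧
        (∀ s ∈ S, E s = s) ∧
        AddSubgroup.closure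
            {x : Module.End ℤ R | ∃ α ∈ bimodEnd S, ∃ β ∈ bimodEnd S,
              x = α * E * β} =
          (bimodEnd S).toAddSubgroup) := by
  obtain ⟨E₀, hE₀U, hE₀S, hE₀id⟩ := hsplit
  refine ⟨fun h ↦ ⟨E₀, hE₀U, hE₀S, hE₀id, ?_⟩, ?_⟩
  · exact (addSubgroupClosure_mul_mul_eq_iff_exists_sum_eq_one hE₀U).2
      (exists_sum_mul_mul_eq_one_of_isDepthOne hE₀U hE₀S hE₀id h)
  · rintro ⟨E, hEU, hES, -, hfull⟩
    obtain ⟨n, α, β, hα, hβ, hsum⟩ :=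
      (addSubgroupClosure_mul_mul_eq_iff_exists_sum_eq_one hEU).1 hfull
    exact isDepthOne_of_sum_mul_mul_eq_one hEU hES hα hβ hsum
end

section
/- Let R ⊇ S be a split ring extension with bimodule projection E: R → S, viewed as an idempotent in U = End_{S-S}(R). Then the corner ring EUE is isomorphic to Z(S), the center of S. -/
/-- The corner `EUE` of `U = End_{S-S}(R)` at the idempotent `E`. -/
def cornerSub {R : Type*} [Ring R] (S : Subring R) (E : Module.End ℤ R)
    (hE : E ∈ bimodEnd S) :
    NonUnitalSubring (Module.End ℤ R) where
  carrier := {x | ∃ α ∈ bimodEnd S, x = E * α * E}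
  zero_mem' := ⟨0, (bimodEnd S).zero_mem, by simp⟩
  add_mem' := by
    rintro x y ⟨α, hα, rfl⟩ ⟨β, hβ, rfl⟩
    exact ⟨α + β, (bimodEnd S).add_mem hα hβ, by noncomm_ring⟩
  neg_mem' := by
    rintro x ⟨α, hα, rfl⟩
    exact ⟨-α, (bimodEnd S).neg_mem hα, by noncomm_ring⟩
  mul_mem' := by
    rintro x y ⟨α, hα, rfl⟩ ⟨β, hβ, rfl⟩
    exact ⟨α * E * E * β,
      (bimodEnd S).mul_mem ((bimodEnd S).mul_mem ((bimodEnd S).mul_mem hα hE) hE) hβ,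
      by noncomm_ring⟩

theorem apply_mem_eq_apply_one_mul {R : Type*} [Ring R] {S : Subring R}
    {F : Module.End ℤ R} (hF : F ∈ bimodEnd S) {s : R} (hs : s ∈ S) : F s = F 1 * s := by
  simpa using (hF s hs 1).2

theorem apply_mem_eq_mul_apply_one {R : Type*} [Ring R] {S : Subring R}
    {F : Module.End ℤ R} (hF : F ∈ bimodEnd S) {s : R} (hs : s ∈ S) : F s = s * F 1 := by
  simpa using (hF s hs 1).1

theorem mulLeft_mem_bimodEnd {R : Type*} [Ring R] {S : Subring R} {z : R}
    (hz : z ∈ Subring.centralizer (S : Set R)) : LinearMap.mulLeft ℤ z ∈ bimodEnd S := by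
  intro s hs r
  refine ⟨?_, (mul_assoc z r s).symm⟩
  change z * (s * r) = s * (z * r)
  rw [← mul_assoc, ← mul_assoc, Subring.mem_centralizer_iff.mp hz s hs]

theorem Subring.coe_mem_centralizer_of_mem_center {R : Type*} [Ring R] {S : Subring R} {z : S}
    (hz : z ∈ Subring.center S) : (z : R) ∈ Subring.centralizer (S : Set R) :=
  Subring.mem_centralizer_iff.mpr fun s hs =>
    congrArg Subtype.val (Subring.mem_center_iff.mp hz ⟨s, hs⟩)

section SplitExtension

variable {R : Type*} [Ring R] {S : Subring R} {E : Module.End ℤ R} {hE : E ∈ bimodEnd S}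

theorem mem_bimodEnd_of_mem_cornerSub {x : Module.End ℤ R} (hx : x ∈ cornerSub S E hE) :
    x ∈ bimodEnd S := by
  obtain ⟨α, hα, rfl⟩ := hx
  exact (bimodEnd S).mul_mem ((bimodEnd S).mul_mem hE hα) hE

variable (hproj : ∀ r : R, E r ∈ S)
include hproj

theorem apply_one_mem_of_mem_cornerSub {x : Module.End ℤ R} (hx : x ∈ cornerSub S E hE) :
    x 1 ∈ S := by
  obtain ⟨α, -, rfl⟩ := hx
  exact hproj _

variable (hid : ∀ s ∈ S, E s = s)
include hid

theorem cornerSub_apply_eq_apply_one_mul {x : Module.End ℤ R} (hx : x ∈ cornerSub S E hE)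
    (r : R) : x r = x 1 * E r := by
  obtain ⟨α, hα, rfl⟩ := hx
  simp only [Module.End.mul_apply, hid 1 S.one_mem]
  rw [apply_mem_eq_apply_one_mul hα (hproj r), (hE _ (hproj r) _).2]

theorem cornerSub_apply_one_mem_center {x : Module.End ℤ R} (hx : x ∈ cornerSub S E hE) :
    (⟨x 1, apply_one_mem_of_mem_cornerSub hproj hx⟩ : S) ∈ Subring.center S := by
  refine Subring.mem_center_iff.mpr fun s => Subtype.ext ?_
  change (s : R) * x 1 = x 1 * s
  rw [← apply_mem_eq_mul_apply_one (mem_bimodEnd_of_mem_cornerSub hx) s.2,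
    cornerSub_apply_eq_apply_one_mul hproj hid hx, hid s s.2]

theorem mulLeft_comp_mem_cornerSub {z : R} (hz : z ∈ Subring.centralizer (S : Set R))
    (hzS : z ∈ S) : LinearMap.mulLeft ℤ z * E ∈ cornerSub S E hE := by
  refine ⟨_, mulLeft_mem_bimodEnd hz, LinearMap.ext fun r => ?_⟩
  change z * E r = E (z * E r)
  rw [(hE z hzS _).1, hid _ (hproj r)]

def cornerSubEquivCenter : cornerSub S E hE ≃+* Subring.center S where
  toFun x := ⟨⟨x.1 1, apply_one_mem_of_mem_cornerSub hproj x.2⟩,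
    cornerSub_apply_one_mem_center hproj hid x.2⟩
  invFun z := ⟨LinearMap.mulLeft ℤ ((z : S) : R) * E, mulLeft_comp_mem_cornerSub hproj hid
    (Subring.coe_mem_centralizer_of_mem_center z.2) (z : S).2⟩
  left_inv x := Subtype.ext <| LinearMap.ext fun r =>
    (cornerSub_apply_eq_apply_one_mul hproj hid x.2 r).symm
  right_inv z := Subtype.ext <| Subtype.ext <| by
    change _ * E 1 = _
    rw [hid 1 S.one_mem, mul_one]
  map_mul' x y := Subtype.ext <| Subtype.ext <| by
    change x.1 (y.1 1) = x.1 1 * y.1 1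
    rw [cornerSub_apply_eq_apply_one_mul hproj hid x.2,
      hid _ (apply_one_mem_of_mem_cornerSub hproj y.2)]
  map_add' _ _ := rfl

end SplitExtension

/-- For a split ring extension `R ⊇ S` with bimodule projection
`E : R → S` viewed as an idempotent of `U = End_{S-S}(R)`, the corner ring `EUE`
is isomorphic to `Z(S)` via `EαE ↦ E(α(1))`. -/
theorem corner_iso_center_of_split {R : Type*} [Ring R] (S : Subring R)
    (E : Module.End ℤ R) (hE : E ∈ bimodEnd S) (hproj : ∀ r : R, E r ∈ S)
    (hid : ∀ s ∈ S, E s = s) :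
    ∃ φ : cornerSub S E hE ≃+* Subring.center S,
      ∀ x : cornerSub S E hE, ((φ x : S) : R) = (x : Module.End ℤ R) 1 :=
  ⟨cornerSubEquivCenter hproj hid, fun _ => rfl⟩
end
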